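/- arXiv:1602.04076 — 6 statements merged into one kernel-verified Lean document; each statement's English description precedes it below -/
import Mathlib

section
/- If G' is obtained from a graph G by adding a vertex v adjacent to all n vertices of G, then USN(G') = USN(G) + 1. -/
/-- A disjointness labelling of `G`: an injective assignment of nonempty
finite subsets of the universe `U` to vertices, such that two distinct
vertices are adjacent iff their labels are disjoint. -/
def IsDisjLabelling {V U : Type*} (G : SimpleGraph V) (ℓ : V → Finset U) : Prop :=
  Function.Injective ℓ ∧ (∀ v, (ℓ v).Nonempty) ∧
    ∀ u v : V, u ≠ v → (G.Adj u v ↔ Disjoint (ℓ u) (ℓ v))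

/-- The universe size number: the minimum size of a universe admitting a
disjointness labelling of `G`. -/
noncomputable def USN {V : Type*} (G : SimpleGraph V) : ℕ :=
  sInf {m : ℕ | ∃ ℓ : V → Finset (Fin m), IsDisjLabelling G ℓ}

/-- `cone G` is `G` together with one new universal vertex (`none`). -/
def cone {V : Type*} (G : SimpleGraph V) : SimpleGraph (Option V) :=
  SimpleGraph.fromRel (fun x y => x = none ∨ ∃ u v, x = some u ∧ y = some v ∧ G.Adj u v)

/-!
A labelling of `G` on `U` extends to the cone on `Option U` by giving the apex the label `{none}`,
which is disjoint from every other label. Conversely, in a labelling of the cone the apex label `L`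
is nonempty and disjoint from all other labels, so those labels live in the complement of `L`,
a universe at least one element smaller.
-/

open Finset

section Cone

variable {V : Type*} (G : SimpleGraph V)

lemma cone_adj_none_some (u : V) : (cone G).Adj none (some u) := by
  simp [cone, SimpleGraph.fromRel_adj]

lemma cone_adj_some_some (u v : V) : (cone G).Adj (some u) (some v) ↔ G.Adj u v := by
  simp only [cone, SimpleGraph.fromRel_adj, reduceCtorEq, false_or, Option.some.injEq,
    exists_and_left, exists_eq_left', ne_eq]
  exact ⟨fun ⟨_, h⟩ => h.elim id fun h => h.symm, fun h => ⟨h.ne, Or.inl h⟩⟩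

end Cone

namespace IsDisjLabelling

variable {V U W : Type*} {G : SimpleGraph V} {ℓ : V → Finset U}

lemma map_iff (f : U ↪ W) : IsDisjLabelling G (fun v => (ℓ v).map f) ↔ IsDisjLabelling G ℓ := by
  unfold IsDisjLabelling
  simp only [map_nonempty, disjoint_map]
  exact and_congr_left' ((map_injective f).of_comp_iff ℓ)

lemma map (h : IsDisjLabelling G ℓ) (f : U ↪ W) : IsDisjLabelling G (fun v => (ℓ v).map f) :=
  (map_iff f).2 h

lemma restrict [DecidableEq U] (h : IsDisjLabelling G ℓ) {s : Finset U} (hs : ∀ v, ℓ v ⊆ s) :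
    IsDisjLabelling G (fun v => (ℓ v).subtype (· ∈ s)) := by
  refine (map_iff (Function.Embedding.subtype (· ∈ s))).1 ?_
  simpa only [subtype_map_of_mem fun _ hx => hs _ hx] using h

lemma usn_le_card [Fintype U] (h : IsDisjLabelling G ℓ) : USN G ≤ Fintype.card U :=
  Nat.sInf_le ⟨_, h.map (Fintype.equivFin U).toEmbedding⟩

lemma exists_usn [Fintype U] (h : IsDisjLabelling G ℓ) :
    ∃ ℓ' : V → Finset (Fin (USN G)), IsDisjLabelling G ℓ' :=
  Nat.sInf_mem (s := {m | ∃ ℓ' : V → Finset (Fin m), IsDisjLabelling G ℓ'})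
    ⟨_, _, h.map (Fintype.equivFin U).toEmbedding⟩

lemma usn_le_card_of_subset (h : IsDisjLabelling G ℓ) {s : Finset U} (hs : ∀ v, ℓ v ⊆ s) :
    USN G ≤ s.card := by
  classical
  simpa using (h.restrict hs).usn_le_card

lemma comp_some {ℓ : Option V → Finset U} (h : IsDisjLabelling (cone G) ℓ) :
    IsDisjLabelling G (ℓ ∘ some) := by
  obtain ⟨hinj, hne, hadj⟩ := h
  refine ⟨hinj.comp (Option.some_injective V), fun v => hne _, fun u v huv => ?_⟩
  exact (cone_adj_some_some G u v).symm.trans (hadj _ _ (by simpa using huv))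

lemma usn_add_one_le_card [Fintype U] [DecidableEq U] {ℓ : Option V → Finset U}
    (h : IsDisjLabelling (cone G) ℓ) : USN G + 1 ≤ Fintype.card U := by
  have hsub (u : V) : ℓ (some u) ⊆ (ℓ none)ᶜ :=
    subset_compl_iff_disjoint_left.2 ((h.2.2 _ _ (by simp)).1 (cone_adj_none_some G u))
  have hle := h.comp_some.usn_le_card_of_subset hsub
  have hpos := (h.2.1 none).card_pos
  have hcard := (ℓ none).card_le_univ
  rw [card_compl] at hle
  omega

lemma cone (h : IsDisjLabelling G ℓ) :
    IsDisjLabelling (cone G) (fun x => x.elim {none} fun u => (ℓ u).map .some) := by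
  obtain ⟨hinj, hne, hadj⟩ := h
  have apex_disjoint (u : V) : Disjoint {none} ((ℓ u).map .some) := by simp
  refine ⟨?_, ?_, ?_⟩
  · rintro (_ | a) (_ | b) hab
    · rfl
    · exact absurd hab ((apex_disjoint b).ne (singleton_nonempty _).ne_empty)
    · exact absurd hab.symm ((apex_disjoint a).ne (singleton_nonempty _).ne_empty)
    · exact congrArg some (hinj (map_injective _ hab))
  · rintro (_ | u)
    · exact singleton_nonempty _
    · exact (hne u).map
  · rintro (_ | u) (_ | v) huv
    · exact absurd rfl huv
    · exact iff_of_true (cone_adj_none_some G v) (apex_disjoint v)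
    · exact iff_of_true (cone_adj_none_some G u).symm (apex_disjoint u).symm
    · exact (cone_adj_some_some G u v).trans
        ((hadj u v (by simpa using huv)).trans (disjoint_map _).symm)

end IsDisjLabelling

-- `(v, v)` lies in the label of `w` iff `w = v`, since `G` has no loops.
def nonAdjPairs {V : Type*} [Fintype V] [DecidableEq V] (G : SimpleGraph V) [DecidableRel G.Adj]
    (v : V) : Finset (V × V) :=
  univ.filter fun p => (p.1 = v ∨ p.2 = v) ∧ ¬G.Adj p.1 p.2

lemma isDisjLabelling_nonAdjPairs {V : Type*} [Fintype V] [DecidableEq V] (G : SimpleGraph V)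
    [DecidableRel G.Adj] : IsDisjLabelling G (nonAdjPairs G) := by
  have mem_iff {p : V × V} {v : V} :
      p ∈ nonAdjPairs G v ↔ (p.1 = v ∨ p.2 = v) ∧ ¬G.Adj p.1 p.2 := by
    simp [nonAdjPairs]
  have diag_mem (v : V) : (v, v) ∈ nonAdjPairs G v := by simp [mem_iff]
  refine ⟨fun a b hab => ?_, fun v => ⟨_, diag_mem v⟩, fun u v huv => ⟨fun hadj => ?_, ?_⟩⟩
  · simpa [mem_iff] using (hab ▸ diag_mem a : (a, a) ∈ nonAdjPairs G b)
  · refine disjoint_left.2 fun p hu hv => ?_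
    obtain ⟨hpu, hnadj⟩ := mem_iff.1 hu
    obtain ⟨hpv, -⟩ := mem_iff.1 hv
    obtain ⟨a, b⟩ := p
    rcases hpu with rfl | rfl <;> rcases hpv with rfl | rfl
    exacts [huv rfl, hnadj hadj, hnadj hadj.symm, huv rfl]
  · contrapose
    intro hnadj
    exact not_disjoint_iff.2 ⟨(u, v), mem_iff.2 ⟨.inl rfl, hnadj⟩, mem_iff.2 ⟨.inr rfl, hnadj⟩⟩

/-- Adding a universal vertex increases the universe size number by exactly one. -/
theorem stmt3 {V : Type*} [Fintype V] [DecidableEq V] (G : SimpleGraph V) :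
    USN (cone G) = USN G + 1 := by
  classical
  have hℓ := isDisjLabelling_nonAdjPairs G
  obtain ⟨ℓG, hG⟩ := hℓ.exists_usn
  obtain ⟨ℓC, hC⟩ := hℓ.cone.exists_usn
  refine le_antisymm ?_ ?_
  · simpa using hG.cone.usn_le_card
  · simpa using hC.usn_add_one_le_card
end

section
/- For the edgeless graph on n = 2^k vertices (k ≥ 1), there exists a disjointness labelling with universe of size k + 1; i.e., USN of the empty graph on 2^k vertices is at most 1 + log₂ n. -/
lemma aux_labelling (k : ℕ) :
    ∃ ℓ : Fin (2 ^ k) → Finset (Fin (k + 1)),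
      IsDisjLabelling (⊥ : SimpleGraph (Fin (2 ^ k))) ℓ := by
  refine ⟨fun v => Finset.univ.filter (fun i => i = Fin.last k ∨ Nat.testBit v.val i.val), ?_, ?_, ?_⟩
  · intro u v huv
    apply Fin.ext
    apply Nat.eq_of_testBit_eq
    intro i
    by_cases hi : i < k
    · have := Finset.ext_iff.mp huv ⟨i, Nat.lt_succ_of_lt hi⟩
      simp only [Finset.mem_filter, Finset.mem_univ, true_and] at this
      have hne : (⟨i, Nat.lt_succ_of_lt hi⟩ : Fin (k+1)) ≠ Fin.last k := by
        simp [Fin.ext_iff, Fin.last, Nat.ne_of_lt hi]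
      simp only [hne, false_or] at this
      exact Bool.coe_iff_coe.mp this
    · push_neg at hi
      have hu : u.val < 2 ^ i := lt_of_lt_of_le u.isLt (Nat.pow_le_pow_right (by norm_num) hi)
      have hv : v.val < 2 ^ i := lt_of_lt_of_le v.isLt (Nat.pow_le_pow_right (by norm_num) hi)
      rw [Nat.testBit_lt_two_pow hu, Nat.testBit_lt_two_pow hv]
  · intro v
    exact ⟨Fin.last k, by simp⟩
  · intro u v huv
    simp only [SimpleGraph.bot_adj, false_iff]
    intro hd
    have hmem : ∀ w : Fin (2 ^ k), Fin.last k ∈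
        Finset.univ.filter (fun i => i = Fin.last k ∨ Nat.testBit w.val i.val) := by
      intro w; simp
    exact Finset.disjoint_left.mp hd (hmem u) (hmem v)

/-- The edgeless graph on `2 ^ k` vertices (`k ≥ 1`) admits a disjointness
labelling with universe of size `k + 1`; hence its USN is at most `1 + log₂ n`. -/
theorem stmt5 (k : ℕ) (hk : 1 ≤ k) :
    (∃ ℓ : Fin (2 ^ k) → Finset (Fin (k + 1)),
      IsDisjLabelling (⊥ : SimpleGraph (Fin (2 ^ k))) ℓ) ∧
      USN (⊥ : SimpleGraph (Fin (2 ^ k))) ≤ k + 1 := by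
  refine ⟨aux_labelling k, Nat.sInf_le (aux_labelling k)⟩
end

section
/- USN of the edgeless graph on n vertices equals 1 + ⌈log₂ n⌉ for n ≥ 2. -/
/-!
Labellings of the edgeless graph are exactly injective maps onto intersecting families. An
intersecting family of subsets of an `m`-set contains at most one set from each complementary
pair, hence has at most `2 ^ (m - 1)` members. Conversely, adding a common point `0` to `n`
distinct subsets of a `k`-set with `n ≤ 2 ^ k` gives an intersecting family on `k + 1` points.
-/

open Finset

section EdgelessGraph

variable {V U : Type*}

theorem isDisjLabelling_bot_iff [DecidableEq U] (ℓ : V → Finset U) :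
    IsDisjLabelling ⊥ ℓ ↔ Function.Injective ℓ ∧ (Set.range ℓ).Intersecting := by
  constructor
  · rintro ⟨hinj, hne, hadj⟩
    refine ⟨hinj, ?_⟩
    rintro _ ⟨u, rfl⟩ _ ⟨v, rfl⟩
    by_cases huv : u = v
    · subst huv
      simpa using (hne u).ne_empty
    · simpa using hadj u v huv
  · rintro ⟨hinj, hs⟩
    refine ⟨hinj, fun v => nonempty_iff_ne_empty.mpr (hs.ne_bot ⟨v, rfl⟩), fun u v _ => ?_⟩
    simpa using hs ⟨u, rfl⟩ ⟨v, rfl⟩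

theorem IsDisjLabelling.two_mul_card_le [Fintype V] [Fintype U] {ℓ : V → Finset U}
    (hℓ : IsDisjLabelling ⊥ ℓ) : 2 * Fintype.card V ≤ 2 ^ Fintype.card U := by
  classical
  obtain ⟨hinj, hs⟩ := (isDisjLabelling_bot_iff ℓ).mp hℓ
  have hcard : #(univ.image ℓ) = Fintype.card V := card_image_of_injective _ hinj
  rw [← hcard, ← Fintype.card_finset]
  exact Set.Intersecting.card_le (by simpa using hs)

theorem exists_isDisjLabelling_bot [Fintype V] {k : ℕ} (hV : Fintype.card V ≤ 2 ^ k) :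
    ∃ ℓ : V → Finset (Fin (k + 1)), IsDisjLabelling ⊥ ℓ := by
  obtain ⟨f⟩ : Nonempty (V ↪ Finset (Fin k)) :=
    Function.Embedding.nonempty_of_card_le (by simpa using hV)
  have herase : ∀ s : Finset (Fin k), (insert 0 (s.map (Fin.succEmb k))).erase 0 =
      s.map (Fin.succEmb k) := fun s => erase_insert (by simp [Fin.succ_ne_zero])
  refine ⟨fun v => insert 0 ((f v).map (Fin.succEmb k)), (isDisjLabelling_bot_iff _).mpr ⟨?_, ?_⟩⟩
  · intro u v huv
    refine f.injective (map_injective (Fin.succEmb k) ?_)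
    rw [← herase (f u), ← herase (f v)]
    exact congrArg (·.erase 0) huv
  · rintro _ ⟨u, rfl⟩ _ ⟨v, rfl⟩
    exact not_disjoint_iff.mpr ⟨0, mem_insert_self _ _, mem_insert_self _ _⟩

theorem usn_bot [Fintype V] [Nonempty V] :
    USN (⊥ : SimpleGraph V) = Nat.clog 2 (Fintype.card V) + 1 := by
  have hupper := exists_isDisjLabelling_bot (V := V) (Nat.le_pow_clog one_lt_two _)
  refine le_antisymm (Nat.sInf_le hupper) (le_csInf ⟨_, hupper⟩ ?_)
  rintro m ⟨ℓ, hℓ⟩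
  have hm : 2 * Fintype.card V ≤ 2 ^ m := by simpa using hℓ.two_mul_card_le
  obtain ⟨m, rfl⟩ : ∃ m', m = m' + 1 := by
    refine Nat.exists_eq_add_one.mpr (Nat.pos_of_ne_zero ?_)
    rintro rfl
    have := Fintype.card_pos (α := V)
    omega
  rw [pow_succ, mul_comm] at hm
  exact Nat.add_le_add_right (Nat.clog_le_of_le_pow (by omega)) 1

end EdgelessGraph

/-- The USN of the edgeless graph on `n ≥ 2` vertices equals `1 + ⌈log₂ n⌉`. -/
theorem stmt7 (n : ℕ) (hn : 2 ≤ n) :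
    USN (⊥ : SimpleGraph (Fin n)) = 1 + Nat.clog 2 n := by
  have : Nonempty (Fin n) := ⟨⟨0, by omega⟩⟩
  rw [usn_bot, Fintype.card_fin, add_comm]
end

section
/- The perfect matching graph on 2n vertices (n disjoint edges) admits a disjointness labelling with a universe of size O(log n): specifically, if k is such that C(k, ⌊k/2⌋) ≥ 2n and the labels are distinct ⌊k/2⌋-element subsets of a k-element set paired with their complements (for even k), then adjacency coincides with disjointness. -/
/-- The perfect matching on `2 * n` vertices: `(i, b)` is adjacent to `(j, c)`
iff `i = j` and `b ≠ c`. -/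
def matchingGraph (n : ℕ) : SimpleGraph (Fin n × Bool) :=
  SimpleGraph.fromRel (fun p q => p.1 = q.1)

open Finset Function

theorem matchingGraph_adj {n : ℕ} {u v : Fin n × Bool} :
    (matchingGraph n).Adj u v ↔ v = (u.1, !u.2) := by
  obtain ⟨i, b⟩ := u
  obtain ⟨j, c⟩ := v
  cases b <;> cases c <;> simp [matchingGraph, eq_comm]

theorem Nat.choose_two_mul_succ_half (m : ℕ) :
    (2 * (m + 1)).choose (m + 1) = 2 * (2 * m + 1).choose (m + 1) := by
  rw [mul_add_one, Nat.choose_succ_succ', ← Nat.choose_symm_half]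
  ring

section HalfSets

variable {α : Type*} [Fintype α] [DecidableEq α]

theorem Finset.disjoint_iff_eq_compl_of_card_add_card_eq {A B : Finset α}
    (h : #A + #B = Fintype.card α) : Disjoint A B ↔ B = Aᶜ := by
  refine ⟨fun hAB => ?_, fun hB => hB ▸ disjoint_compl_right⟩
  refine eq_of_subset_of_card_le (subset_compl_iff_disjoint_left.mpr hAB) ?_
  rw [card_compl]
  omega

theorem isDisjLabelling_matchingGraph {n m : ℕ} (hm : 0 < m) (hα : Fintype.card α = 2 * m)
    {ℓ : Fin n × Bool → Finset α} (hinj : Injective ℓ) (hcard : ∀ p, #(ℓ p) = m)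
    (hcompl : ∀ p : Fin n × Bool, ℓ (p.1, !p.2) = (ℓ p)ᶜ) :
    IsDisjLabelling (matchingGraph n) ℓ := by
  refine ⟨hinj, fun p => card_pos.mp (hcard p ▸ hm), fun u v _ => ?_⟩
  rw [matchingGraph_adj, disjoint_iff_eq_compl_of_card_add_card_eq (by rw [hcard, hcard]; omega),
    ← hcompl, hinj.eq_iff]

def pairWithCompl {ι : Type*} (S : ι → Finset α) (p : ι × Bool) : Finset α :=
  cond p.2 (S p.1)ᶜ (S p.1)

variable {ι : Type*} {S : ι → Finset α}

theorem pairWithCompl_not (p : ι × Bool) :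
    pairWithCompl S (p.1, !p.2) = (pairWithCompl S p)ᶜ := by
  obtain ⟨i, _ | _⟩ := p <;> simp [pairWithCompl]

theorem card_pairWithCompl {m : ℕ} (hα : Fintype.card α = 2 * m) (hS : ∀ i, #(S i) = m)
    (p : ι × Bool) : #(pairWithCompl S p) = m := by
  obtain ⟨i, _ | _⟩ := p
  · exact hS i
  · simp only [pairWithCompl, cond_true, card_compl, hα, hS]
    omega

/-- The point `a`, lying in every complement and in no `S i`, tells the two halves apart. -/
theorem pairWithCompl_injective {a : α} (hS : Injective S) (ha : ∀ i, a ∉ S i) :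
    Injective (pairWithCompl S) := by
  have mem_iff (p : ι × Bool) : a ∈ pairWithCompl S p ↔ p.2 = true := by
    obtain ⟨i, _ | _⟩ := p <;> simp [pairWithCompl, ha]
  rintro ⟨i, b⟩ ⟨j, c⟩ hij
  obtain rfl : b = c := Bool.eq_iff_iff.mpr <| by rw [← mem_iff (i, b), hij, mem_iff]
  cases b <;> simpa [pairWithCompl, hS.eq_iff] using hij

theorem exists_injective_card_eq_of_notMem {n m : ℕ} (a : α)
    (h : n ≤ (Fintype.card α - 1).choose m) :
    ∃ S : Fin n → Finset α, Injective S ∧ (∀ i, #(S i) = m) ∧ ∀ i, a ∉ S i := by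
  set F := (univ.erase a).powersetCard m
  have hF : Fintype.card (Fin n) ≤ Fintype.card F := by
    rwa [Fintype.card_fin, Fintype.card_coe, card_powersetCard, card_erase_of_mem (mem_univ a),
      card_univ]
  obtain ⟨f⟩ := Function.Embedding.nonempty_of_card_le hF
  have hmem (i : Fin n) : (f i : Finset α) ⊆ univ.erase a ∧ #(f i : Finset α) = m :=
    mem_powersetCard.mp (f i).2
  exact ⟨fun i => f i, Subtype.val_injective.comp f.injective, fun i => (hmem i).2,
    fun i hi => by simpa using (hmem i).1 hi⟩

end HalfSets

/-- If `k` is even and `C(k, k/2) ≥ 2n`, the perfect matching on `2n` vertices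
admits a disjointness labelling by `k/2`-element subsets of a `k`-element
universe, where matched partners receive complementary sets. -/
theorem stmt9 (n k : ℕ) (hk : Even k) (h : 2 * n ≤ k.choose (k / 2)) :
    ∃ ℓ : Fin n × Bool → Finset (Fin k),
      IsDisjLabelling (matchingGraph n) ℓ ∧ (∀ p, (ℓ p).card = k / 2) ∧
        ∀ p : Fin n × Bool, ℓ (p.1, !p.2) = (ℓ p)ᶜ := by
  obtain ⟨_ | m, rfl⟩ := hk.two_dvd
  · obtain rfl : n = 0 := by simp at h; omega
    exact ⟨isEmptyElim, ⟨injective_of_subsingleton _, isEmptyElim, isEmptyElim⟩,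
      isEmptyElim, isEmptyElim⟩
  have hα : Fintype.card (Fin (2 * (m + 1))) = 2 * (m + 1) := Fintype.card_fin _
  rw [Nat.mul_div_cancel_left _ two_pos] at h ⊢
  rw [Nat.choose_two_mul_succ_half] at h
  obtain ⟨S, hSinj, hScard, hS0⟩ :=
    exists_injective_card_eq_of_notMem (0 : Fin (2 * (m + 1))) (n := n) (m := m + 1)
      (by rw [hα, show 2 * (m + 1) - 1 = 2 * m + 1 by omega]; omega)
  exact ⟨pairWithCompl S,
    isDisjLabelling_matchingGraph m.succ_pos hα (pairWithCompl_injective hSinj hS0)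
      (card_pairWithCompl hα hScard) pairWithCompl_not,
    card_pairWithCompl hα hScard, pairWithCompl_not⟩
end

section
/- Let G and H be graphs on the same vertex set V with disjoint edge sets. Then USN(G ∪ H) ≤ USN(G) · USN(H), where G ∪ H is the graph on V whose edge set is E(G) ∪ E(H): given disjointness labellings ℓ_G and ℓ_H with universes U_G and U_H, the map v ↦ ℓ_G(v) × ℓ_H(v) ⊆ U_G × U_H is a valid disjointness labelling of G ∪ H. -/
private lemma disjoint_prod_iff {α β : Type*} (s s' : Finset α) (t t' : Finset β)
    (hs : s.Nonempty) (ht : t.Nonempty) (hs' : s'.Nonempty) (ht' : t'.Nonempty) :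
    Disjoint (s ×ˢ t) (s' ×ˢ t') ↔ Disjoint s s' ∨ Disjoint t t' := by
  constructor
  · intro h
    by_contra hc
    push_neg at hc
    obtain ⟨h1, h2⟩ := hc
    rw [Finset.not_disjoint_iff] at h1 h2
    obtain ⟨x, hxs, hxs'⟩ := h1
    obtain ⟨y, hyt, hyt'⟩ := h2
    exact (Finset.disjoint_left.1 h (Finset.mk_mem_product hxs hyt))
      (Finset.mk_mem_product hxs' hyt')
  · rintro (h | h) <;> rw [Finset.disjoint_left] <;>
      rintro ⟨x, y⟩ hxy hxy' <;> rw [Finset.mem_product] at hxy hxy'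
    · exact Finset.disjoint_left.1 h hxy.1 hxy'.1
    · exact Finset.disjoint_left.1 h hxy.2 hxy'.2

private lemma labelling_prod {V U1 U2 : Type*} (G H : SimpleGraph V)
    (ℓG : V → Finset U1) (ℓH : V → Finset U2)
    (hG : IsDisjLabelling G ℓG) (hH : IsDisjLabelling H ℓH) :
    IsDisjLabelling (G ⊔ H) (fun v => ℓG v ×ˢ ℓH v) := by
  obtain ⟨hGi, hGn, hGa⟩ := hG
  obtain ⟨hHi, hHn, hHa⟩ := hH
  refine ⟨?_, fun v => (hGn v).product (hHn v), fun u v huv => ?_⟩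
  · intro u v h
    simp only at h
    apply hGi
    obtain ⟨y, hy⟩ := hHn u
    have hyv : y ∈ ℓH v := by
      obtain ⟨x, hx⟩ := hGn u
      have : (x, y) ∈ ℓG v ×ˢ ℓH v := h ▸ Finset.mk_mem_product hx hy
      exact (Finset.mem_product.1 this).2
    ext z
    constructor
    · intro hz
      have : (z, y) ∈ ℓG v ×ˢ ℓH v := h ▸ Finset.mk_mem_product hz hy
      exact (Finset.mem_product.1 this).1
    · intro hz
      have : (z, y) ∈ ℓG u ×ˢ ℓH u := h ▸ Finset.mk_mem_product hz hyv
      exact (Finset.mem_product.1 this).1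
  · simp only [SimpleGraph.sup_adj]
    rw [hGa u v huv, hHa u v huv,
      disjoint_prod_iff _ _ _ _ (hGn u) (hHn u) (hGn v) (hHn v)]

private lemma labelling_map {V U U' : Type*} (G : SimpleGraph V) (ℓ : V → Finset U)
    (h : IsDisjLabelling G ℓ) (e : U ↪ U') :
    IsDisjLabelling G (fun v => (ℓ v).map e) := by
  obtain ⟨hi, hn, ha⟩ := h
  refine ⟨fun u v huv => hi (Finset.map_injective e huv), fun v => (hn v).map,
    fun u v huv => ?_⟩
  rw [ha u v huv]
  exact (Finset.disjoint_map e).symm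

/-- For edge-disjoint graphs `G, H` on the same vertex set, products of labels
give a disjointness labelling of `G ⊔ H`; hence `USN (G ⊔ H) ≤ USN G * USN H`. -/
theorem stmt15 {V : Type*} [Fintype V] (G H : SimpleGraph V)
    (hdisj : Disjoint G.edgeSet H.edgeSet)
    {a b : ℕ} {ℓG : V → Finset (Fin a)} {ℓH : V → Finset (Fin b)}
    (hG : IsDisjLabelling G ℓG) (hH : IsDisjLabelling H ℓH) :
    IsDisjLabelling (G ⊔ H) (fun v => ℓG v ×ˢ ℓH v) ∧
      USN (G ⊔ H) ≤ USN G * USN H := by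
  refine ⟨labelling_prod G H ℓG ℓH hG hH, ?_⟩
  have hGne : {m : ℕ | ∃ ℓ : V → Finset (Fin m), IsDisjLabelling G ℓ}.Nonempty :=
    ⟨a, ℓG, hG⟩
  have hHne : {m : ℕ | ∃ ℓ : V → Finset (Fin m), IsDisjLabelling H ℓ}.Nonempty :=
    ⟨b, ℓH, hH⟩
  obtain ⟨ℓG', hG'⟩ := Nat.sInf_mem hGne
  obtain ⟨ℓH', hH'⟩ := Nat.sInf_mem hHne
  have hprod := labelling_prod G H ℓG' ℓH' hG' hH'
  have hmap := labelling_map (G ⊔ H) _ hprod finProdFinEquiv.toEmbedding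
  exact Nat.sInf_le ⟨_, hmap⟩
end

section
/- For the path P_n on n vertices there is a constant C such that USN(P_n) ≤ C · (log n)² for all n ≥ 2. -/
/-! ### Auxiliary construction -/

/-- the `k`-th binary digit of `i` -/
def bitN (i k : ℕ) : ℕ := i / 2 ^ k % 2

lemma bitN_lt_two (i k : ℕ) : bitN i k < 2 := Nat.mod_lt _ (by norm_num)

/-- "left" label of edge `i` in a matching, over universe of size `2b+2`. -/
def setL (b i : ℕ) : Finset (Fin (2 * b + 2)) :=
  Finset.univ.filter (fun x => (x : ℕ) = 2 * b ∨
    ((x : ℕ) < 2 * b ∧ (x : ℕ) % 2 = bitN i ((x : ℕ) / 2)))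

/-- "right" label of edge `i` in a matching. -/
def setR (b i : ℕ) : Finset (Fin (2 * b + 2)) :=
  Finset.univ.filter (fun x => (x : ℕ) = 2 * b + 1 ∨
    ((x : ℕ) < 2 * b ∧ (x : ℕ) % 2 = 1 - bitN i ((x : ℕ) / 2)))

lemma mem_setL {b i : ℕ} {x : Fin (2*b+2)} :
    x ∈ setL b i ↔ ((x : ℕ) = 2 * b ∨
      ((x : ℕ) < 2 * b ∧ (x : ℕ) % 2 = bitN i ((x : ℕ) / 2))) := by
  simp [setL]

lemma mem_setR {b i : ℕ} {x : Fin (2*b+2)} :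
    x ∈ setR b i ↔ ((x : ℕ) = 2 * b + 1 ∨
      ((x : ℕ) < 2 * b ∧ (x : ℕ) % 2 = 1 - bitN i ((x : ℕ) / 2))) := by
  simp [setR]

lemma setL_nonempty (b i : ℕ) : (setL b i).Nonempty :=
  ⟨⟨2 * b, by omega⟩, mem_setL.2 (Or.inl rfl)⟩

lemma setR_nonempty (b i : ℕ) : (setR b i).Nonempty :=
  ⟨⟨2 * b + 1, by omega⟩, mem_setR.2 (Or.inl rfl)⟩

lemma not_disjoint_setL_setL (b i j : ℕ) : ¬ Disjoint (setL b i) (setL b j) := by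
  rw [Finset.not_disjoint_iff]
  exact ⟨⟨2 * b, by omega⟩, mem_setL.2 (Or.inl rfl), mem_setL.2 (Or.inl rfl)⟩

lemma not_disjoint_setR_setR (b i j : ℕ) : ¬ Disjoint (setR b i) (setR b j) := by
  rw [Finset.not_disjoint_iff]
  exact ⟨⟨2 * b + 1, by omega⟩, mem_setR.2 (Or.inl rfl), mem_setR.2 (Or.inl rfl)⟩

lemma bits_eq_of_lt {b i j : ℕ} (hi : i < 2 ^ b) (hj : j < 2 ^ b)
    (h : ∀ k < b, bitN i k = bitN j k) : i = j := by
  apply Nat.eq_of_testBit_eq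
  intro k
  rcases lt_or_ge k b with hk | hk
  · have := h k hk
    simp only [Nat.testBit_eq_decide_div_mod_eq]
    unfold bitN at this
    rw [this]
  · have h2 : 2 ^ b ≤ 2 ^ k := Nat.pow_le_pow_right (by norm_num) hk
    rw [Nat.testBit_lt_two_pow (lt_of_lt_of_le hi h2),
        Nat.testBit_lt_two_pow (lt_of_lt_of_le hj h2)]

lemma disjoint_setL_setR {b i j : ℕ} (hi : i < 2 ^ b) (hj : j < 2 ^ b) :
    Disjoint (setL b i) (setR b j) ↔ i = j := by
  constructor
  · intro hd
    apply bits_eq_of_lt hi hj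
    intro k hk
    by_contra hne
    have hbi := bitN_lt_two i k
    have hbj := bitN_lt_two j k
    have hx : 2 * k + bitN i k < 2 * b + 2 := by omega
    have h1 : ((⟨2 * k + bitN i k, hx⟩ : Fin (2*b+2)) : ℕ) = 2 * k + bitN i k := rfl
    have hmemL : (⟨2 * k + bitN i k, hx⟩ : Fin (2*b+2)) ∈ setL b i := by
      rw [mem_setL, h1]
      right
      constructor
      · omega
      · have : (2 * k + bitN i k) / 2 = k := by omega
        rw [this]; omega
    have hmemR : (⟨2 * k + bitN i k, hx⟩ : Fin (2*b+2)) ∈ setR b j := by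
      rw [mem_setR, h1]
      right
      constructor
      · omega
      · have : (2 * k + bitN i k) / 2 = k := by omega
        rw [this]; omega
    exact Finset.disjoint_left.1 hd hmemL hmemR
  · rintro rfl
    rw [Finset.disjoint_left]
    intro x hL hR
    rw [mem_setL] at hL
    rw [mem_setR] at hR
    have := bitN_lt_two i ((x : ℕ) / 2)
    omega

lemma setL_ne_setR (b i j : ℕ) : setL b i ≠ setR b j := by
  intro h
  have : (⟨2 * b, by omega⟩ : Fin (2*b+2)) ∈ setL b i := mem_setL.2 (Or.inl rfl)
  rw [h, mem_setR] at this
  simp only [] at this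
  omega

lemma setL_inj {b i j : ℕ} (hi : i < 2 ^ b) (hj : j < 2 ^ b)
    (h : setL b i = setL b j) : i = j := by
  have : Disjoint (setL b j) (setR b j) := (disjoint_setL_setR hj hj).2 rfl
  rw [← h] at this
  exact (disjoint_setL_setR hi hj).1 this

lemma setR_inj {b i j : ℕ} (hi : i < 2 ^ b) (hj : j < 2 ^ b)
    (h : setR b i = setR b j) : i = j := by
  have : Disjoint (setL b i) (setR b i) := (disjoint_setL_setR hi hi).2 rfl
  rw [h] at this
  exact (disjoint_setL_setR hi hj).1 this

/-- First-coordinate label (even matching). -/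
def lab0 (b : ℕ) {n : ℕ} (v : Fin n) : Finset (Fin (2*b+2)) :=
  if (v : ℕ) % 2 = 0 then setL b ((v : ℕ) / 2) else setR b ((v : ℕ) / 2)

/-- Second-coordinate label (odd matching). -/
def lab1 (b : ℕ) {n : ℕ} (v : Fin n) : Finset (Fin (2*b+2)) :=
  if (v : ℕ) % 2 = 1 then setL b ((v : ℕ) / 2) else setR b (((v : ℕ) - 1) / 2)

/-- The combined product label. -/
def lab (b : ℕ) {n : ℕ} (v : Fin n) : Finset (Fin (2*b+2) × Fin (2*b+2)) :=
  (lab0 b v) ×ˢ (lab1 b v)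

/-- general bound: a labelling over any finite universe bounds USN. -/
lemma USN_le_card {V U : Type*} [Fintype U] [DecidableEq U] (G : SimpleGraph V)
    (ℓ : V → Finset U) (h : IsDisjLabelling G ℓ) : USN G ≤ Fintype.card U := by
  apply Nat.sInf_le
  refine ⟨fun v => (ℓ v).map (Fintype.equivFin U).toEmbedding, ?_, ?_, ?_⟩
  · intro u v huv
    exact h.1 (Finset.map_injective _ huv)
  · intro v
    exact Finset.map_nonempty.2 (h.2.1 v)
  · intro u v huv
    rw [Finset.disjoint_map]
    exact h.2.2 u v huv

lemma lab_isDisjLabelling (n : ℕ) (hn : 2 ≤ n) :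
    IsDisjLabelling (SimpleGraph.pathGraph n) (lab (Nat.log 2 n)) := by
  set b := Nat.log 2 n with hb
  have hsmall : ∀ v : Fin n, (v : ℕ) / 2 < 2 ^ b := by
    intro v
    have h1 : n < 2 ^ (b + 1) := Nat.lt_pow_succ_log_self (by norm_num) n
    have h2 : (v : ℕ) < n := v.isLt
    have : 2 ^ (b + 1) = 2 * 2 ^ b := by ring
    omega
  refine ⟨?_, ?_, ?_⟩
  · -- injectivity via first coordinate
    intro u v huv
    have h0 : lab0 b u = lab0 b v := by
      obtain ⟨x, hx⟩ := setL_nonempty b ((u : ℕ) / 2)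
      obtain ⟨y, hy⟩ := setR_nonempty b ((u : ℕ) / 2)
      -- lab0 u is nonempty; extract equality of first components from product equality
      have hne0 : (lab0 b u).Nonempty := by
        unfold lab0; split <;> [exact setL_nonempty _ _; exact setR_nonempty _ _]
      have hne1 : (lab1 b u).Nonempty := by
        unfold lab1; split <;> [exact setL_nonempty _ _; exact setR_nonempty _ _]
      have hne1' : (lab1 b v).Nonempty := by
        unfold lab1; split <;> [exact setL_nonempty _ _; exact setR_nonempty _ _]
      ext a
      constructor
      · intro ha
        obtain ⟨c, hc⟩ := hne1
        have : (a, c) ∈ lab b u := Finset.mem_product.2 ⟨ha, hc⟩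
        rw [huv] at this
        exact (Finset.mem_product.1 this).1
      · intro ha
        obtain ⟨c, hc⟩ := hne1'
        have : (a, c) ∈ lab b v := Finset.mem_product.2 ⟨ha, hc⟩
        rw [← huv] at this
        exact (Finset.mem_product.1 this).1
    unfold lab0 at h0
    have hu2 := hsmall u
    have hv2 := hsmall v
    rcases Nat.mod_two_eq_zero_or_one (u : ℕ) with hu | hu <;>
      rcases Nat.mod_two_eq_zero_or_one (v : ℕ) with hv | hv
    · simp only [hu, hv, if_pos rfl] at h0
      have := setL_inj hu2 hv2 (by simpa [hu, hv] using h0)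
      have : (u : ℕ) = (v : ℕ) := by omega
      exact Fin.ext this
    · rw [if_pos hu, if_neg (by omega)] at h0
      exact absurd h0 (setL_ne_setR _ _ _)
    · rw [if_neg (by omega), if_pos hv] at h0
      exact absurd h0.symm (setL_ne_setR _ _ _)
    · rw [if_neg (by omega), if_neg (by omega)] at h0
      have := setR_inj hu2 hv2 h0
      have : (u : ℕ) = (v : ℕ) := by omega
      exact Fin.ext this
  · intro v
    have hne0 : (lab0 b v).Nonempty := by
      unfold lab0; split <;> [exact setL_nonempty _ _; exact setR_nonempty _ _]
    have hne1 : (lab1 b v).Nonempty := by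
      unfold lab1; split <;> [exact setL_nonempty _ _; exact setR_nonempty _ _]
    exact hne0.product hne1
  · intro u v huv
    rw [SimpleGraph.pathGraph_adj]
    have hprod : Disjoint (lab b u) (lab b v) ↔
        Disjoint (lab0 b u) (lab0 b v) ∨ Disjoint (lab1 b u) (lab1 b v) := by
      constructor
      · intro hd
        by_contra hc
        push_neg at hc
        obtain ⟨hc0, hc1⟩ := hc
        obtain ⟨a, ha0, ha0'⟩ := Finset.not_disjoint_iff.1 hc0
        obtain ⟨c, hc0', hc1'⟩ := Finset.not_disjoint_iff.1 hc1
        unfold lab at hd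
        exact Finset.disjoint_left.1 hd
          (Finset.mk_mem_product ha0 hc0') (Finset.mk_mem_product ha0' hc1')
      · intro hd
        rw [Finset.disjoint_left]
        rintro ⟨a, c⟩ hm hm'
        unfold lab at hm hm'
        rw [Finset.mem_product] at hm hm'
        rcases hd with hd | hd
        · exact Finset.disjoint_left.1 hd hm.1 hm'.1
        · exact Finset.disjoint_left.1 hd hm.2 hm'.2
    rw [hprod]
    have hu2 := hsmall u
    have hv2 := hsmall v
    have hvne : (u : ℕ) ≠ (v : ℕ) := fun h => huv (Fin.ext h)
    constructor
    · -- adjacent → disjoint in some coordinate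
      intro hadj
      rcases hadj with hadj | hadj
      · -- u + 1 = v
        rcases Nat.mod_two_eq_zero_or_one (u : ℕ) with hu | hu
        · left
          unfold lab0
          rw [if_pos hu, if_neg (by omega)]
          exact (disjoint_setL_setR hu2 hv2).2 (by omega)
        · right
          unfold lab1
          rw [if_pos hu, if_neg (by omega)]
          have : (v : ℕ) - 1 = (u : ℕ) := by omega
          rw [this]
          exact (disjoint_setL_setR hu2 hu2).2 rfl
      · -- v + 1 = u
        rcases Nat.mod_two_eq_zero_or_one (v : ℕ) with hv | hv
        · left
          unfold lab0
          rw [if_pos hv, if_neg (by omega)]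
          exact Disjoint.symm ((disjoint_setL_setR hv2 hu2).2 (by omega))
        · right
          unfold lab1
          rw [if_pos hv, if_neg (by omega)]
          have : (u : ℕ) - 1 = (v : ℕ) := by omega
          rw [this]
          exact Disjoint.symm ((disjoint_setL_setR hv2 hv2).2 rfl)
    · -- disjoint in some coordinate → adjacent
      intro hd
      rcases hd with hd | hd
      · unfold lab0 at hd
        rcases Nat.mod_two_eq_zero_or_one (u : ℕ) with hu | hu <;>
          rcases Nat.mod_two_eq_zero_or_one (v : ℕ) with hv | hv
        · rw [if_pos hu, if_pos hv] at hd
          exact absurd hd (not_disjoint_setL_setL _ _ _)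
        · rw [if_pos hu, if_neg (by omega)] at hd
          have := (disjoint_setL_setR hu2 hv2).1 hd
          omega
        · rw [if_neg (by omega), if_pos hv] at hd
          have := (disjoint_setL_setR hv2 hu2).1 hd.symm
          omega
        · rw [if_neg (by omega), if_neg (by omega)] at hd
          exact absurd hd (not_disjoint_setR_setR _ _ _)
      · unfold lab1 at hd
        have hu1 : ((u : ℕ) - 1) / 2 < 2 ^ b := by
          have := hsmall u; omega
        have hv1 : ((v : ℕ) - 1) / 2 < 2 ^ b := by
          have := hsmall v; omega
        rcases Nat.mod_two_eq_zero_or_one (u : ℕ) with hu | hu <;>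
          rcases Nat.mod_two_eq_zero_or_one (v : ℕ) with hv | hv
        · rw [if_neg (by omega), if_neg (by omega)] at hd
          exact absurd hd (not_disjoint_setR_setR _ _ _)
        · rw [if_neg (by omega), if_pos hv] at hd
          have := (disjoint_setL_setR hv2 hu1).1 hd.symm
          omega
        · rw [if_pos hu, if_neg (by omega)] at hd
          have := (disjoint_setL_setR hu2 hv1).1 hd
          omega
        · rw [if_pos hu, if_pos hv] at hd
          exact absurd hd (not_disjoint_setL_setL _ _ _)

/-- `USN (P_n) = O((log n)^2)`: there is a constant `C` with
`USN (P_n) ≤ C * (log₂ n)^2` for all `n ≥ 2`. -/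
theorem stmt17 : ∃ C : ℕ, ∀ n : ℕ, 2 ≤ n →
    USN (SimpleGraph.pathGraph n) ≤ C * (Nat.log 2 n) ^ 2 := by
  refine ⟨16, fun n hn => ?_⟩
  set b := Nat.log 2 n with hb
  have hb1 : 1 ≤ b := Nat.log_pos (by norm_num) hn
  have h1 : USN (SimpleGraph.pathGraph n) ≤ Fintype.card (Fin (2*b+2) × Fin (2*b+2)) :=
    USN_le_card _ _ (lab_isDisjLabelling n hn)
  have h2 : Fintype.card (Fin (2*b+2) × Fin (2*b+2)) = (2*b+2) * (2*b+2) := by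
    simp [Fintype.card_prod]
  have h3 : (2*b+2) * (2*b+2) ≤ 16 * b ^ 2 := by nlinarith
  omega
end
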